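/- Under the alternating even/odd line swap strategy, after n−2 layers, for indices 1 ≤ i1 < i2 ≤ n−1 that are not in the case 'odd and ≥ n−2', the displacement difference p_{n−2}(q_{i1}) − p_{n−2}(q_{i2}) equals i2 − i1 if i1 ≡ i2 (mod 2); equals i2 − i1 + 4 if i1 is even and i2 is odd; and equals i2 − i1 − 4 if i1 is odd and i2 is even. -/
import Mathlib


/-- The swap layer on all even-numbered edges `(i, i+1)` (with `i` even) of a path with
`n` vertices, viewed as the map it induces on positions. -/
def evenSwap (n j : ℕ) : ℕ :=
  if j % 2 = 0 then (if j + 1 < n then j + 1 else j) else j - 1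

/-- The swap layer on all odd-numbered edges `(i, i+1)` (with `i` odd) of a path with
`n` vertices, viewed as the map it induces on positions. -/
def oddSwap (n j : ℕ) : ℕ :=
  if j % 2 = 1 then (if j + 1 < n then j + 1 else j) else (if j = 0 then j else j - 1)

/-- `linePos n k i` is the position, after `k` swap layers of the alternating line swap
strategy (starting with the even-edge layer), of the token that started at vertex `i`. -/
def linePos (n : ℕ) : ℕ → ℕ → ℕ
  | 0, i => i
  | k + 1, i => (if k % 2 = 0 then evenSwap n else oddSwap n) (linePos n k i)



theorem linePos_formula (n : ℕ) (hn : 2 ≤ n) (i : ℕ) (hi : i < n) :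
    ∀ k, k ≤ n - 2 →
      linePos n k i = if i % 2 = 0 then min (i + k) (2 * n - 1 - i - k)
        else max (i - k) (k - i - 1) := by
  intro k
  induction k with
  | zero => intro _; simp only [linePos]; split_ifs <;> omega
  | succ k ih =>
    intro hk
    have h := ih (by omega)
    rcases eq_or_ne (k % 2) 0 with hk2 | hk2
    · simp only [linePos, h, if_pos hk2, evenSwap]
      split_ifs <;> omega
    · simp only [linePos, h, if_neg hk2, oddSwap]
      split_ifs <;> omega

/-- displacement differences after `n - 2` layers of the alternating
even/odd line swap strategy, for indices `1 ≤ i₁ < i₂ ≤ n - 1` that are not in the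
case "odd and `≥ n - 2`". -/
theorem line_swap_displacement_difference (n : ℕ) (hn : 2 ≤ n) (i₁ i₂ : ℕ)
    (h1 : 1 ≤ i₁) (h12 : i₁ < i₂) (h2 : i₂ ≤ n - 1)
    (hc1 : ¬(i₁ % 2 = 1 ∧ n - 2 ≤ i₁)) (hc2 : ¬(i₂ % 2 = 1 ∧ n - 2 ≤ i₂)) :
    (linePos n (n - 2) i₁ : ℤ) - (linePos n (n - 2) i₂ : ℤ) =
      if i₁ % 2 = i₂ % 2 then (i₂ : ℤ) - i₁
      else if i₁ % 2 = 0 then (i₂ : ℤ) - i₁ + 4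
      else (i₂ : ℤ) - i₁ - 4 := by
  have e1 := linePos_formula n hn i₁ (by omega) (n - 2) le_rfl
  have e2 := linePos_formula n hn i₂ (by omega) (n - 2) le_rfl
  rw [e1, e2]
  split_ifs <;> omega
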